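/- Let (Ω, 𝔽, ℙ) be a probability space, let k be a positive natural number, let σ > 0, and let N : Ω → EuclideanSpace ℝ (Fin k) be a random vector whose coordinates are independent Gaussian random variables with mean 0 and variance σ². Then for every real r ≥ 0, E[‖N‖ · 1_{‖N‖ ≥ r}] ≤ σ · √k · 2^{k/4} · exp(−r²/(8σ²)). -/

import Mathlib

/-!
By Cauchy–Schwarz, `E[‖N‖ 1_{‖N‖ ≥ r}] ≤ √(E‖N‖²) √ℙ(‖N‖ ≥ r)`, and `E‖N‖² = kσ²`.
For the tail, apply the Chernoff bound to `‖N‖² = ∑ Nᵢ²` at `t = 1/(4σ²)`: by independence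
the moment generating function factorizes, and each factor is
`E[exp (t Nᵢ²)] = (1 - 2tσ²)^(-1/2) = √2`, so `ℙ(‖N‖ ≥ r) ≤ 2^(k/2) exp (-r²/(4σ²))`.
-/

open MeasureTheory ProbabilityTheory Real
open scoped NNReal

lemma integral_sq_gaussianReal (μ : ℝ) (v : ℝ≥0) :
    ∫ x, x ^ 2 ∂gaussianReal μ v = μ ^ 2 + v := by
  have h := variance_eq_sub (X := fun x => x) (memLp_id_gaussianReal (μ := μ) (v := v) 2)
  simp only [variance_fun_id_gaussianReal, integral_id_gaussianReal, Pi.pow_apply] at h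
  linarith

lemma integral_exp_mul_sq_gaussianReal {v : ℝ≥0} (hv : v ≠ 0) {t : ℝ} (ht : 2 * t * v < 1) :
    ∫ x, exp (t * x ^ 2) ∂gaussianReal 0 v = (√(1 - 2 * t * v))⁻¹ := by
  have hv0 : (0 : ℝ) < v := by positivity
  have hdens : ∀ x, gaussianPDFReal 0 v x • exp (t * x ^ 2) =
      (√(2 * π * v))⁻¹ * exp (-((1 - 2 * t * v) / (2 * v)) * x ^ 2) := fun x => by
    rw [gaussianPDFReal, smul_eq_mul, mul_assoc, ← exp_add]
    congr 2
    field_simp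
    ring
  rw [integral_gaussianReal_eq_integral_smul hv, integral_congr_ae (ae_of_all _ hdens),
    integral_const_mul, integral_gaussian, div_div_eq_mul_div, sqrt_div' _ (by linarith)]
  field_simp

section HasLawGaussian

variable {Ω : Type*} {mΩ : MeasurableSpace Ω} {P : Measure Ω} {X : Ω → ℝ} {μ : ℝ} {v : ℝ≥0}

lemma integrable_sq_of_hasLaw_gaussianReal (hX : HasLaw X (gaussianReal μ v) P) :
    Integrable (fun ω => X ω ^ 2) P := by
  have h := (memLp_id_gaussianReal (μ := μ) (v := v) 2).integrable_sq
  rw [← hX.map_eq] at h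
  exact (integrable_map_measure (by fun_prop) hX.aemeasurable).1 h

lemma integral_sq_of_hasLaw_gaussianReal (hX : HasLaw X (gaussianReal μ v) P) :
    ∫ ω, X ω ^ 2 ∂P = μ ^ 2 + v :=
  (hX.integral_comp (f := fun x => x ^ 2) (by fun_prop)).trans (integral_sq_gaussianReal μ v)

lemma mgf_sq_of_hasLaw_gaussianReal (hX : HasLaw X (gaussianReal 0 v) P) (hv : v ≠ 0) {t : ℝ}
    (ht : 2 * t * v < 1) :
    mgf (fun ω => X ω ^ 2) P t = (√(1 - 2 * t * v))⁻¹ :=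
  (hX.integral_comp (f := fun x => exp (t * x ^ 2)) (by fun_prop)).trans
    (integral_exp_mul_sq_gaussianReal hv ht)

end HasLawGaussian

section GaussianVector

variable {Ω ι : Type*} {mΩ : MeasurableSpace Ω} {P : Measure Ω} [Fintype ι]
  {N : Ω → EuclideanSpace ℝ ι} {v : ℝ≥0}

lemma integrable_norm_sq_of_hasLaw_gaussianReal
    (hN : ∀ i, HasLaw (fun ω => N ω i) (gaussianReal 0 v) P) :
    Integrable (fun ω => ‖N ω‖ ^ 2) P := by
  simp only [EuclideanSpace.real_norm_sq_eq]
  exact integrable_finsetSum _ fun i _ => integrable_sq_of_hasLaw_gaussianReal (hN i)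

lemma integral_norm_sq_of_hasLaw_gaussianReal
    (hN : ∀ i, HasLaw (fun ω => N ω i) (gaussianReal 0 v) P) :
    ∫ ω, ‖N ω‖ ^ 2 ∂P = Fintype.card ι * v := by
  simp only [EuclideanSpace.real_norm_sq_eq]
  rw [integral_finsetSum _ fun i _ => integrable_sq_of_hasLaw_gaussianReal (hN i)]
  simp [integral_sq_of_hasLaw_gaussianReal (hN _)]

lemma measureReal_norm_ge_le_two_rpow_mul_exp (hv : v ≠ 0)
    (hindep : iIndepFun (fun i ω => N ω i) P)
    (hN : ∀ i, HasLaw (fun ω => N ω i) (gaussianReal 0 v) P) {r : ℝ} (hr : 0 ≤ r) :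
    P.real {ω | r ≤ ‖N ω‖} ≤ 2 ^ ((Fintype.card ι : ℝ) / 2) * exp (-r ^ 2 / (4 * v)) := by
  have := hindep.isProbabilityMeasure
  have hv0 : (0 : ℝ) < v := by positivity
  set t : ℝ := (4 * v)⁻¹
  have htv : 1 - 2 * t * v = 2⁻¹ := by
    simp only [t]
    field_simp
    norm_num
  have ht : 2 * t * v < 1 := by linarith
  set X : ι → Ω → ℝ := fun i ω => N ω i ^ 2
  have hindepX : iIndepFun X P := hindep.comp _ fun _ => measurable_id.pow_const 2
  have hX : ∀ i, AEMeasurable (X i) P := fun i => (hN i).aemeasurable.pow_const 2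
  have hmgf : mgf (∑ i, X i) P t = 2 ^ ((Fintype.card ι : ℝ) / 2) := by
    rw [hindepX.mgf_sum₀ hX,
      Finset.prod_congr rfl fun i _ => mgf_sq_of_hasLaw_gaussianReal (hN i) hv ht,
      Finset.prod_const, Finset.card_univ, htv, sqrt_inv, inv_inv, sqrt_eq_rpow,
      ← rpow_natCast, ← rpow_mul zero_le_two]
    ring_nf
  have hset : {ω | r ≤ ‖N ω‖} = {ω | r ^ 2 ≤ (∑ i, X i) ω} := by
    ext ω
    simp only [Set.mem_ofPred_eq, Finset.sum_apply, X, ← EuclideanSpace.real_norm_sq_eq]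
    exact (pow_le_pow_iff_left₀ hr (norm_nonneg _) two_ne_zero).symm
  have hint : Integrable (fun ω => exp (t * (∑ i, X i) ω)) P :=
    Integrable.of_integral_ne_zero (by rw [← mgf, hmgf]; positivity)
  calc P.real {ω | r ≤ ‖N ω‖} ≤ exp (-t * r ^ 2) * mgf (∑ i, X i) P t := by
        rw [hset]; exact measure_ge_le_exp_mul_mgf _ (by positivity) hint
    _ = _ := by
      rw [hmgf, mul_comm]
      congr 2
      simp only [t]
      field_simp

end GaussianVector

lemma integral_indicator_le_sqrt_integral_sq_mul_sqrt_measureReal {Ω : Type*}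
    {mΩ : MeasurableSpace Ω} {P : Measure Ω} [IsFiniteMeasure P] {f : Ω → ℝ} {s : Set Ω}
    (hf0 : 0 ≤ f) (hf : MemLp f 2 P) (hs : MeasurableSet s) :
    ∫ ω, s.indicator f ω ∂P ≤ √(∫ ω, f ω ^ 2 ∂P) * √(P.real s) := by
  have h1 : MemLp (s.indicator 1 : Ω → ℝ) 2 P :=
    memLp_indicator_const 2 hs 1 (Or.inr (measure_ne_top _ _))
  have hmul : ∀ ω, s.indicator f ω = f ω * s.indicator 1 ω := fun ω => by
    by_cases h : ω ∈ s <;> simp [h]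
  have hsq : ∀ ω, s.indicator (1 : Ω → ℝ) ω ^ (2 : ℝ) = s.indicator 1 ω := fun ω => by
    by_cases h : ω ∈ s <;> simp [h]
  have hCS := integral_mul_le_Lp_mul_Lq_of_nonneg (f := f) (g := s.indicator 1)
    Real.HolderConjugate.two_two (ae_of_all _ hf0)
    (ae_of_all _ (s.indicator_nonneg fun _ _ => zero_le_one))
    (by rwa [ENNReal.ofReal_ofNat]) (by rwa [ENNReal.ofReal_ofNat])
  simpa only [← hmul, hsq, rpow_two, integral_indicator_one hs, ← sqrt_eq_rpow] using hCS

theorem stmt5_general {Ω : Type*} [MeasureSpace Ω] [IsProbabilityMeasure (ℙ : Measure Ω)]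
    (k : ℕ) (σ : ℝ) (hσ : 0 < σ)
    (N : Ω → EuclideanSpace ℝ (Fin k)) (hNmeas : Measurable N)
    (hindep : iIndepFun (fun i ω => N ω i) ℙ)
    (hlaw : ∀ i, Measure.map (fun ω => N ω i) ℙ = gaussianReal 0 ⟨σ ^ 2, sq_nonneg σ⟩)
    (r : ℝ) (hr : 0 ≤ r) :
    ∫ ω, Set.indicator {ω | r ≤ ‖N ω‖} (fun ω => ‖N ω‖) ω ∂ℙ ≤
      σ * Real.sqrt k * 2 ^ ((k : ℝ) / 4) * Real.exp (-(r ^ 2) / (8 * σ ^ 2)) := by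
  have hv : (⟨σ ^ 2, sq_nonneg σ⟩ : ℝ≥0) ≠ 0 := ne_of_gt (show (0 : ℝ) < σ ^ 2 by positivity)
  have hN : ∀ i, HasLaw (fun ω => N ω i) (gaussianReal 0 ⟨σ ^ 2, sq_nonneg σ⟩) ℙ :=
    fun i => ⟨by fun_prop, hlaw i⟩
  have hNorm : MemLp (fun ω => ‖N ω‖) 2 ℙ :=
    (memLp_two_iff_integrable_sq hNmeas.norm.aestronglyMeasurable).2
      (integrable_norm_sq_of_hasLaw_gaussianReal hN)
  calc _ ≤ √(∫ ω, ‖N ω‖ ^ 2 ∂ℙ) * √((ℙ : Measure Ω).real {ω | r ≤ ‖N ω‖}) :=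
        integral_indicator_le_sqrt_integral_sq_mul_sqrt_measureReal (fun ω => norm_nonneg _)
          hNorm (measurableSet_le measurable_const hNmeas.norm)
    _ ≤ √(k * σ ^ 2) * √(2 ^ ((k : ℝ) / 2) * exp (-r ^ 2 / (4 * σ ^ 2))) := by
        have htail := measureReal_norm_ge_le_two_rpow_mul_exp hv hindep hN hr
        rw [Fintype.card_fin] at htail
        rw [integral_norm_sq_of_hasLaw_gaussianReal hN, Fintype.card_fin]
        exact mul_le_mul_of_nonneg_left (sqrt_le_sqrt htail) (sqrt_nonneg _)
    _ = _ := by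
        rw [sqrt_mul' _ (sq_nonneg σ), sqrt_sq hσ.le, sqrt_mul' _ (exp_nonneg _), ← exp_half,
          sqrt_eq_rpow (2 ^ _), ← rpow_mul zero_le_two]
        ring_nf

/-- Truncated first-moment bound from the proof of Corollary 4.7: if `N` is a random
vector in `EuclideanSpace ℝ (Fin k)` whose coordinates are independent centered Gaussians
of variance `σ²`, then for every `r ≥ 0`,
`E[‖N‖ · 1_{‖N‖ ≥ r}] ≤ σ √k 2^(k/4) exp (-r² / (8σ²))`. -/
theorem stmt5 {Ω : Type*} [MeasureSpace Ω] [IsProbabilityMeasure (ℙ : Measure Ω)]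
    (k : ℕ) (hk : 0 < k) (σ : ℝ) (hσ : 0 < σ)
    (N : Ω → EuclideanSpace ℝ (Fin k)) (hNmeas : Measurable N)
    (hindep : iIndepFun (fun i ω => N ω i) ℙ)
    (hlaw : ∀ i, Measure.map (fun ω => N ω i) ℙ = gaussianReal 0 ⟨σ ^ 2, sq_nonneg σ⟩)
    (r : ℝ) (hr : 0 ≤ r) :
    ∫ ω, Set.indicator {ω | r ≤ ‖N ω‖} (fun ω => ‖N ω‖) ω ∂ℙ ≤
      σ * Real.sqrt k * 2 ^ ((k : ℝ) / 4) * Real.exp (-(r ^ 2) / (8 * σ ^ 2)) :=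
  stmt5_general k σ hσ N hNmeas hindep hlaw r hr
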